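/- arXiv:1511.06829 — 8 statements merged into one kernel-verified Lean document; each statement's English description precedes it below -/
import Mathlib

section
/- Let E be a real inner product space, F a dense linear subspace of E, x ∈ E with x ≠ 0, and y ∈ F. Then there exists a continuous linear operator K : E → E such that (i) K is symmetric with respect to the inner product, i.e. ⟨K u, v⟩ = ⟨u, K v⟩ for all u, v ∈ E; (ii) the range of K is a finite-dimensional subspace of E contained in F; and (iii) K x = y. -/
open scoped RealInnerProductSpace

open InnerProductSpace

theorem Dense.exists_mem_inner_eq_one {𝕜 E : Type*} [RCLike 𝕜] [NormedAddCommGroup E]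
    [InnerProductSpace 𝕜 E] {S : Submodule 𝕜 E} (hS : Dense (S : Set E)) {x : E} (hx : x ≠ 0) :
    ∃ w ∈ S, inner 𝕜 w x = 1 := by
  by_contra! h
  refine hx (hS.eq_zero_of_inner_right 𝕜 fun v hv ↦ ?_)
  by_contra hvx
  refine h ((starRingEnd 𝕜 (inner 𝕜 v x))⁻¹ • v) (S.smul_mem _ hv) ?_
  simp [inner_smul_left, hvx]

section

variable {E : Type*} [NormedAddCommGroup E] [InnerProductSpace ℝ E]

theorem isSymmetric_rankOne_add_rankOne (v w : E) :
    (rankOne ℝ v w + rankOne ℝ w v : E →L[ℝ] E).toLinearMap.IsSymmetric := fun u u' ↦ by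
  simp only [ContinuousLinearMap.toLinearMap_add, LinearMap.add_apply, ContinuousLinearMap.coe_coe,
    rankOne_apply, inner_add_left, inner_add_right, real_inner_smul_left, real_inner_smul_right]
  rw [real_inner_comm u w, real_inner_comm u v]
  ring

/-- When `⟪w, x⟫ = 1`, the last term cancels the contribution `⟪y, x⟫ • w` of the symmetrizing
term `rankOne w y` at `x`. -/
noncomputable def symmetricInterpolant (w x y : E) : E →L[ℝ] E :=
  rankOne ℝ y w + rankOne ℝ w y - ⟪y, x⟫ • rankOne ℝ w w

theorem isSymmetric_symmetricInterpolant (w x y : E) :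
    (symmetricInterpolant w x y).toLinearMap.IsSymmetric :=
  (isSymmetric_rankOne_add_rankOne y w).sub ((isSymmetric_rankOne_self w).smul rfl)

theorem range_symmetricInterpolant_le (w x y : E) :
    LinearMap.range (symmetricInterpolant w x y).toLinearMap ≤ Submodule.span ℝ {y, w} := by
  rintro _ ⟨u, rfl⟩
  refine Submodule.mem_span_pair.mpr ⟨⟪w, u⟫, ⟪y, u⟫ - ⟪y, x⟫ * ⟪w, u⟫, ?_⟩
  simp [symmetricInterpolant, sub_smul, mul_smul, add_sub_assoc]

theorem symmetricInterpolant_apply_self {w x : E} (hwx : ⟪w, x⟫ = 1) (y : E) :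
    symmetricInterpolant w x y x = y := by
  simp [symmetricInterpolant, hwx, real_inner_comm x y]

end

/-- Proposition 2.2: on a real inner product space `E`, given a dense subspace `F`,
`x ≠ 0` and `y ∈ F`, there is a continuous symmetric finite-rank operator `K`
with range contained in `F` and `K x = y`. -/
theorem exists_symmetric_finiteRank_operator
    {E : Type*} [NormedAddCommGroup E] [InnerProductSpace ℝ E]
    (F : Submodule ℝ E) (hF : Dense (F : Set E))
    (x : E) (hx : x ≠ 0) (y : E) (hy : y ∈ F) :
    ∃ K : E →L[ℝ] E,
      (∀ u v : E, ⟪K u, v⟫ = ⟪u, K v⟫) ∧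
      FiniteDimensional ℝ (LinearMap.range (K : E →ₗ[ℝ] E)) ∧
      LinearMap.range (K : E →ₗ[ℝ] E) ≤ F ∧
      K x = y := by
  obtain ⟨w, hwF, hwx⟩ := hF.exists_mem_inner_eq_one hx
  have hrange := range_symmetricInterpolant_le w x y
  have : FiniteDimensional ℝ (Submodule.span ℝ ({y, w} : Set E)) :=
    FiniteDimensional.span_of_finite ℝ (Set.toFinite _)
  exact ⟨symmetricInterpolant w x y, isSymmetric_symmetricInterpolant w x y,
    Submodule.finiteDimensional_of_le hrange,
    hrange.trans (Submodule.span_le.mpr (Set.pair_subset hy hwF)),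
    symmetricInterpolant_apply_self hwx y⟩
end

section
/- Let n be a natural number with n ≥ 2, and let p, q be real numbers with p > 1, q > 1 satisfying 1/(p+1) + 1/(q+1) > (n−1)/n. Then there exists a real number s with 0 < s < 1 such that n − 2s > 0, n − 2(1−s) > 0, p·(n − 2s) < n + 2s, and q·(n − 2(1−s)) < n + 2(1−s); equivalently, p < (n+2s)/(n−2s) and q < (n+2(1−s))/(n−2(1−s)). -/
/-- Subcriticality (1.4) implies the existence of a fractional order `s ∈ (0,1)`
with `p < (n+2s)/(n-2s)` and `q < (n+2(1-s))/(n-2(1-s))`, as in (1.4.1). -/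
theorem exists_fractional_order (n : ℕ) (hn : 2 ≤ n) (p q : ℝ) (hp : 1 < p) (hq : 1 < q)
    (hpq : ((n : ℝ) - 1) / n < 1 / (p + 1) + 1 / (q + 1)) :
    ∃ s : ℝ, 0 < s ∧ s < 1 ∧ 0 < (n : ℝ) - 2 * s ∧ 0 < (n : ℝ) - 2 * (1 - s) ∧
      p * ((n : ℝ) - 2 * s) < (n : ℝ) + 2 * s ∧
      q * ((n : ℝ) - 2 * (1 - s)) < (n : ℝ) + 2 * (1 - s) := by
  have hn2 : (2:ℝ) ≤ (n:ℝ) := by exact_mod_cast hn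
  have hn0 : (0:ℝ) < (n:ℝ) := by linarith
  have hp1 : (0:ℝ) < p + 1 := by linarith
  have hq1 : (0:ℝ) < q + 1 := by linarith
  obtain ⟨a, ha⟩ : ∃ a : ℝ, a = (n:ℝ) * (p - 1) / (2 * (p + 1)) := ⟨_, rfl⟩
  obtain ⟨b, hb⟩ : ∃ b : ℝ, b = 1 - (n:ℝ) * (q - 1) / (2 * (q + 1)) := ⟨_, rfl⟩
  have key : ((n:ℝ) - 1) * ((p+1) * (q+1)) < (p + q + 2) * (n:ℝ) := by
    rw [div_lt_iff₀ hn0] at hpq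
    have e1 : (1 / (p+1) + 1 / (q+1)) * ((p+1) * (q+1)) = p + q + 2 := by
      field_simp; ring
    nlinarith [mul_lt_mul_of_pos_right hpq (mul_pos hp1 hq1)]
  have hab : a < b := by
    have h : (n:ℝ) * (p - 1) / (2 * (p + 1)) + (n:ℝ) * (q - 1) / (2 * (q + 1)) < 1 := by
      rw [div_add_div _ _ (by positivity) (by positivity), div_lt_one (by positivity)]
      nlinarith [key]
    rw [ha, hb]; linarith
  have ha0 : 0 < a := by
    rw [ha]; exact div_pos (by nlinarith) (by positivity)
  have hb1 : b < 1 := by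
    have : 0 < (n:ℝ) * (q - 1) / (2 * (q + 1)) := div_pos (by nlinarith) (by positivity)
    rw [hb]; linarith
  refine ⟨(a + b) / 2, by linarith, by linarith, by linarith, by linarith, ?_, ?_⟩
  · have hs : (n:ℝ) * (p - 1) / (2 * (p + 1)) < (a + b) / 2 := by rw [← ha]; linarith
    rw [div_lt_iff₀ (by positivity)] at hs
    linarith
  · have hs : (n:ℝ) * (q - 1) / (2 * (q + 1)) < 1 - (a + b) / 2 := by
      have : (a + b) / 2 < b := by linarith
      rw [hb] at this; linarith
    rw [div_lt_iff₀ (by positivity)] at hs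
    linarith
end

section
/- Let E and F be real normed vector spaces, let p > 1 and q > 1 be real numbers, and let f : E × F → ℝ be Fréchet differentiable. Suppose there is a constant c₁ > 0 such that for all (u,v) ∈ E × F and all ξ ∈ E, ζ ∈ F: |Df(u,v)(ξ,0)| ≤ c₁·(1 + ‖u‖^p + ‖v‖^{p(q+1)/(p+1)})·‖ξ‖ and |Df(u,v)(0,ζ)| ≤ c₁·(1 + ‖u‖^{q(p+1)/(q+1)} + ‖v‖^q)·‖ζ‖. Then there exists a constant C > 0 such that |f(u,v)| ≤ C·(1 + ‖u‖^{p+1} + ‖v‖^{q+1}) for all (u,v) ∈ E × F. -/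
/-!
Integrate the derivative along `(0,0) → (0,v)` and then `(0,v) → (u,v)`. On the first path
`u = 0`, so the `ζ`-bound is just `c₁ (1 + ‖v‖^q)`. On the second, the cross term
`‖v‖^(p(q+1)/(p+1)) ‖u‖` is split by Young's inequality with exponents `p + 1` and `(p + 1)/p`
into `‖u‖^(p+1) + ‖v‖^(q+1)`.
-/

open Real

section MeanValue

variable {E F G : Type*} [NormedAddCommGroup E] [NormedSpace ℝ E]
  [NormedAddCommGroup F] [NormedSpace ℝ F] [NormedAddCommGroup G] [NormedSpace ℝ G]

theorem norm_sub_le_of_fderiv_apply_le {g : E → G} (hg : Differentiable ℝ g) {u : E} {C : ℝ}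
    (hC : 0 ≤ C) (h : ∀ x, ‖x‖ ≤ ‖u‖ → ∀ ξ, ‖fderiv ℝ g x ξ‖ ≤ C * ‖ξ‖) :
    ‖g u - g 0‖ ≤ C * ‖u‖ := by
  simpa using (convex_closedBall (0 : E) ‖u‖).norm_image_sub_le_of_norm_fderiv_le
    (fun x _ => hg x)
    (fun x hx => (fderiv ℝ g x).opNorm_le_bound hC (h x (by simpa using hx)))
    (x := 0) (y := u) (by simp) (by simp)

theorem fderiv_comp_prodMk_left_apply {f : E × F → G} {x : E} {v : F}
    (hf : DifferentiableAt ℝ f (x, v)) (ξ : E) :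
    fderiv ℝ (fun w => f (w, v)) x ξ = fderiv ℝ f (x, v) (ξ, 0) := by
  have hcomp : HasFDerivAt (fun w => f (w, v)) _ x :=
    hf.hasFDerivAt.comp x (hasFDerivAt_prodMk_left x v)
  rw [hcomp.fderiv]
  rfl

theorem fderiv_comp_prodMk_right_apply {f : E × F → G} {u : E} {y : F}
    (hf : DifferentiableAt ℝ f (u, y)) (ζ : F) :
    fderiv ℝ (fun w => f (u, w)) y ζ = fderiv ℝ f (u, y) (0, ζ) := by
  have hcomp : HasFDerivAt (fun w => f (u, w)) _ y :=
    hf.hasFDerivAt.comp y (hasFDerivAt_prodMk_right u y)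
  rw [hcomp.fderiv]
  rfl

theorem norm_sub_le_of_fderiv_inl_le {f : E × F → G} (hf : Differentiable ℝ f) {u : E} {v : F}
    {C : ℝ} (hC : 0 ≤ C) (h : ∀ x, ‖x‖ ≤ ‖u‖ → ∀ ξ, ‖fderiv ℝ f (x, v) (ξ, 0)‖ ≤ C * ‖ξ‖) :
    ‖f (u, v) - f (0, v)‖ ≤ C * ‖u‖ :=
  norm_sub_le_of_fderiv_apply_le (g := fun w => f (w, v)) (by fun_prop) hC fun x hx ξ => by
    simpa only [fderiv_comp_prodMk_left_apply (hf (x, v))] using h x hx ξ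

theorem norm_sub_le_of_fderiv_inr_le {f : E × F → G} (hf : Differentiable ℝ f) {u : E} {v : F}
    {C : ℝ} (hC : 0 ≤ C) (h : ∀ y, ‖y‖ ≤ ‖v‖ → ∀ ζ, ‖fderiv ℝ f (u, y) (0, ζ)‖ ≤ C * ‖ζ‖) :
    ‖f (u, v) - f (u, 0)‖ ≤ C * ‖v‖ :=
  norm_sub_le_of_fderiv_apply_le (g := fun w => f (u, w)) (by fun_prop) hC fun y hy ζ => by
    simpa only [fderiv_comp_prodMk_right_apply (hf (u, y))] using h y hy ζ

end MeanValue

theorem mul_rpow_le_rpow_add_rpow {a b p q : ℝ} (ha : 0 ≤ a) (hb : 0 ≤ b) (hp : 0 < p) :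
    a * b ^ (p * (q + 1) / (p + 1)) ≤ a ^ (p + 1) + b ^ (q + 1) := by
  have hpq : (p + 1).HolderConjugate ((p + 1) / p) := by
    rw [holderConjugate_iff]
    exact ⟨by linarith, by field_simp; ring⟩
  have hexp : (b ^ (p * (q + 1) / (p + 1))) ^ ((p + 1) / p) = b ^ (q + 1) := by
    rw [← rpow_mul hb]
    congr 1
    field_simp
  have hyoung := young_inequality_of_nonneg (b := b ^ (p * (q + 1) / (p + 1))) ha
    (rpow_nonneg hb _) hpq
  rw [hexp] at hyoung
  have hdiv₁ : a ^ (p + 1) / (p + 1) ≤ a ^ (p + 1) :=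
    div_le_self (rpow_nonneg ha _) (by linarith)
  have hdiv₂ : b ^ (q + 1) / ((p + 1) / p) ≤ b ^ (q + 1) :=
    div_le_self (rpow_nonneg hb _) (by rw [le_div_iff₀ hp]; linarith)
  linarith

theorem le_one_add_rpow {a p : ℝ} (ha : 0 ≤ a) (hp : 1 ≤ p) : a ≤ 1 + a ^ p := by
  rcases le_or_gt a 1 with h | h
  · linarith [rpow_nonneg ha p]
  · linarith [self_le_rpow_of_one_le h.le hp]

theorem one_add_rpow_mul_add_le {a b p q : ℝ} (ha : 0 ≤ a) (hb : 0 ≤ b) (hp : 0 < p)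
    (hq : 0 ≤ q) :
    (1 + a ^ p + b ^ (p * (q + 1) / (p + 1))) * a + (1 + b ^ q) * b ≤
      3 * (1 + a ^ (p + 1) + b ^ (q + 1)) := by
  have hyoung := mul_rpow_le_rpow_add_rpow (q := q) ha hb hp
  have ha₁ := le_one_add_rpow ha (p := p + 1) (by linarith)
  have hb₁ := le_one_add_rpow hb (p := q + 1) (by linarith)
  rw [rpow_add_one' ha (by linarith)] at hyoung ha₁ ⊢
  rw [rpow_add_one' hb (by linarith)] at hyoung hb₁ ⊢
  linarith

/-- The growth conditions (H2) on the fiber derivatives imply the superquadratic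
growth bound (2.4.2): `|f(u,v)| ≤ C (1 + ‖u‖^(p+1) + ‖v‖^(q+1))`. -/
theorem growth_bound_of_derivative_growth
    {E F : Type*} [NormedAddCommGroup E] [NormedSpace ℝ E]
    [NormedAddCommGroup F] [NormedSpace ℝ F]
    (p q : ℝ) (hp : 1 < p) (hq : 1 < q)
    (f : E × F → ℝ) (hf : Differentiable ℝ f)
    (c₁ : ℝ) (hc₁ : 0 < c₁)
    (h1 : ∀ (u : E) (v : F) (ξ : E),
      |fderiv ℝ f (u, v) (ξ, 0)| ≤
        c₁ * (1 + ‖u‖ ^ p + ‖v‖ ^ (p * (q + 1) / (p + 1))) * ‖ξ‖)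
    (h2 : ∀ (u : E) (v : F) (ζ : F),
      |fderiv ℝ f (u, v) (0, ζ)| ≤
        c₁ * (1 + ‖u‖ ^ (q * (p + 1) / (q + 1)) + ‖v‖ ^ q) * ‖ζ‖) :
    ∃ C : ℝ, 0 < C ∧ ∀ (u : E) (v : F),
      |f (u, v)| ≤ C * (1 + ‖u‖ ^ (p + 1) + ‖v‖ ^ (q + 1)) := by
  refine ⟨3 * c₁ + |f (0, 0)| + 1, by positivity, fun u v => ?_⟩
  have hfst : |f (u, v) - f (0, v)| ≤
      c₁ * (1 + ‖u‖ ^ p + ‖v‖ ^ (p * (q + 1) / (p + 1))) * ‖u‖ :=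
    norm_sub_le_of_fderiv_inl_le hf (by positivity) fun x hx ξ =>
      (h1 x v ξ).trans (by gcongr)
  have hsnd : |f (0, v) - f (0, 0)| ≤ c₁ * (1 + ‖v‖ ^ q) * ‖v‖ :=
    norm_sub_le_of_fderiv_inr_le hf (by positivity) fun y hy ζ => (h2 0 y ζ).trans (by
      rw [norm_zero, zero_rpow (by positivity), add_zero]
      gcongr)
  have hgrowth := one_add_rpow_mul_add_le (norm_nonneg u) (norm_nonneg v) (by linarith : 0 < p)
    (by linarith : 0 ≤ q)
  have htri := abs_sub_le (f (u, v)) (f (0, v)) (f (0, 0))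
  have hrev := abs_sub_abs_le_abs_sub (f (u, v)) (f (0, 0))
  nlinarith [rpow_nonneg (norm_nonneg u) (p + 1), rpow_nonneg (norm_nonneg v) (q + 1),
    abs_nonneg (f (0, 0))]
end

section
/- Let H be a real Hilbert space and let U and V be closed subspaces of H with orthogonal projections P_U, P_V : H → H (regarded as continuous linear endomorphisms of H). If P_U − P_V is a compact operator, then the subspaces U ∩ V^⊥ and U^⊥ ∩ V are both finite-dimensional. -/
/-!
`P_U - P_V` is the identity on `U ∩ Vᗮ` and minus the identity on `Uᗮ ∩ V`, so both spaces lie in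
eigenspaces of a compact operator for nonzero eigenvalues, and these are finite-dimensional.
-/

open Module End

namespace Submodule

variable {𝕜 E : Type*} [RCLike 𝕜] [NormedAddCommGroup E] [InnerProductSpace 𝕜 E]
  (U V : Submodule 𝕜 E) [U.HasOrthogonalProjection] [V.HasOrthogonalProjection]

theorem inf_orthogonal_le_eigenspace_starProjection_sub :
    U ⊓ Vᗮ ≤ eigenspace ((U.starProjection - V.starProjection : E →L[𝕜] E) : End 𝕜 E) 1 := by
  rintro x ⟨hxU, hxV⟩
  simp [starProjection_eq_self_iff.mpr hxU, (V.starProjection_apply_eq_zero_iff).mpr hxV]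

theorem orthogonal_inf_le_eigenspace_starProjection_sub :
    Uᗮ ⊓ V ≤ eigenspace ((U.starProjection - V.starProjection : E →L[𝕜] E) : End 𝕜 E) (-1) := by
  rintro x ⟨hxU, hxV⟩
  simp [starProjection_eq_self_iff.mpr hxV, (U.starProjection_apply_eq_zero_iff).mpr hxU]

end Submodule

theorem finiteDimensional_of_compact_projection_diff_general
    {H : Type*} [NormedAddCommGroup H] [InnerProductSpace ℝ H] [CompleteSpace H]
    (U V : Submodule ℝ H)
    [CompleteSpace U] [CompleteSpace V]
    (hcomp : IsCompactOperator
      ⇑(U.subtypeL.comp (U.orthogonalProjection) - V.subtypeL.comp (V.orthogonalProjection))) :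
    FiniteDimensional ℝ ↥(U ⊓ Vᗮ) ∧ FiniteDimensional ℝ ↥(Uᗮ ⊓ V) := by
  change IsCompactOperator ⇑(U.starProjection - V.starProjection) at hcomp
  have := ContinuousLinearMap.finite_dimensional_eigenspace hcomp 1 one_ne_zero
  have := ContinuousLinearMap.finite_dimensional_eigenspace hcomp (-1) (neg_ne_zero.mpr one_ne_zero)
  exact ⟨Submodule.finiteDimensional_of_le (U.inf_orthogonal_le_eigenspace_starProjection_sub V),
    Submodule.finiteDimensional_of_le (U.orthogonal_inf_le_eigenspace_starProjection_sub V)⟩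

/-- If the orthogonal projections onto two closed subspaces `U`, `V` of a real
Hilbert space differ by a compact operator, then `U ∩ Vᗮ` and `Uᗮ ∩ V` are
finite-dimensional (well-definedness of the relative dimension, Definition 4.2). -/
theorem finiteDimensional_of_compact_projection_diff
    {H : Type*} [NormedAddCommGroup H] [InnerProductSpace ℝ H] [CompleteSpace H]
    (U V : Submodule ℝ H) (hU : IsClosed (U : Set H)) (hV : IsClosed (V : Set H))
    [CompleteSpace U] [CompleteSpace V]
    (hcomp : IsCompactOperator
      ⇑(U.subtypeL.comp (U.orthogonalProjection) - V.subtypeL.comp (V.orthogonalProjection))) :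
    FiniteDimensional ℝ ↥(U ⊓ Vᗮ) ∧ FiniteDimensional ℝ ↥(Uᗮ ⊓ V) :=
  finiteDimensional_of_compact_projection_diff_general U V hcomp
end

section
/- Let H be a real Hilbert space and let U, V, W be closed subspaces of H with orthogonal projections P_U, P_V, P_W : H → H. Assume P_U − P_W and P_W − P_V are compact operators (so that P_U − P_V is also compact and U, V, W are pairwise commensurable). Define the relative dimension of a commensurable pair (X,Y) as the integer dim(X,Y) := dim(X ∩ Y^⊥) − dim(Y ∩ X^⊥). Then dim(U,V) = dim(U,W) + dim(W,V). -/
/-!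
Write `P_V|_U : U → V` for the orthogonal projection onto `V` restricted to `U`. Its kernel is
`U ∩ V^⊥`, and `V ∩ U^⊥` injects into its cokernel. When `P_U - P_V` is compact, both
`P_U|_V ∘ P_V|_U` and `P_V|_U ∘ P_U|_V` are compact perturbations of the identity, hence Fredholm of
index `0` (approximate the compact part by a finite-rank operator and invert the rest by a Neumann
series). Additivity of the index then forces both injections to be isomorphisms, so
`index (P_V|_U) = dim(U,V)`. Finally `P_U|_W ∘ P_W|_V ∘ P_V|_U` is again a compact perturbation of
the identity of `U`, whence `dim(U,V) + dim(V,W) + dim(W,U) = 0`.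
-/

open Module Submodule LinearMap

namespace LinearMap

variable {K M N P : Type*} [DivisionRing K] [AddCommGroup M] [Module K M] [AddCommGroup N]
  [Module K N] [AddCommGroup P] [Module K P]

structure IsAlgFredholm (f : M →ₗ[K] N) : Prop where
  finiteDimensional_ker : FiniteDimensional K (ker f)
  finiteDimensional_coker : FiniteDimensional K (N ⧸ range f)

namespace IsAlgFredholm

variable {f : M →ₗ[K] N} {g : N →ₗ[K] P}

theorem comp (hg : g.IsAlgFredholm) (hf : f.IsAlgFredholm) : (g ∘ₗ f).IsAlgFredholm := by
  have := hf.1; have := hf.2; have := hg.1; have := hg.2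
  constructor
  · rw [ker_comp]; infer_instance
  · rw [range_comp]; infer_instance

theorem index_comp (hg : g.IsAlgFredholm) (hf : f.IsAlgFredholm) :
    (g ∘ₗ f).index = g.index + f.index := by
  have := hf.1; have := hf.2; have := hg.1; have := hg.2
  exact LinearMap.index_comp (f := f) g

theorem finiteDimensional_ker_of_comp (h : (g ∘ₗ f).IsAlgFredholm) :
    FiniteDimensional K (ker f) :=
  have := h.1
  Submodule.finiteDimensional_of_le (ker_le_ker_comp f g)

theorem finiteDimensional_coker_of_comp (h : (g ∘ₗ f).IsAlgFredholm) :
    FiniteDimensional K (P ⧸ range g) :=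
  have := h.2
  (quotientQuotientEquivQuotient _ _ (range_comp_le_range f g)).finiteDimensional

end IsAlgFredholm

theorem _root_.LinearEquiv.isAlgFredholm (e : M ≃ₗ[K] N) : (e : M →ₗ[K] N).IsAlgFredholm := by
  constructor
  · rw [LinearEquiv.ker]; infer_instance
  · rw [LinearEquiv.range]; infer_instance

/-- The restriction to `Z = range (f - id)` has the same kernel and, since `Z ⊔ range f = ⊤`,
the same cokernel as `f`; it is an endomorphism of a finite-dimensional space. -/
theorem isAlgFredholm_and_index_eq_zero_of_finiteDimensional_range_sub_id {f : M →ₗ[K] M}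
    [FiniteDimensional K (range (f - id))] : f.IsAlgFredholm ∧ f.index = 0 := by
  set Z := range (f - id)
  have sub_mem (x : M) : f x - x ∈ Z := ⟨x, rfl⟩
  have mapsTo (z : M) (hz : z ∈ Z) : f z ∈ Z := by
    simpa using Z.add_mem hz (sub_mem z)
  have ker_le : ker f ≤ Z := fun x hx => by
    simpa [mem_ker.mp hx] using Z.neg_mem (sub_mem x)
  set g : Z →ₗ[K] Z := f.restrict mapsTo
  have ker_g : ker g ≃ₗ[K] ker f := by
    rw [ker_restrict]; exact comapSubtypeEquivOfLe ker_le
  set χ : Z →ₗ[K] M ⧸ range f := (range f).mkQ ∘ₗ Z.subtype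
  have hχ : Function.Surjective χ := by
    intro q
    obtain ⟨x, rfl⟩ := (range f).mkQ_surjective q
    refine ⟨⟨x - f x, by simpa using Z.neg_mem (sub_mem x)⟩, ?_⟩
    simp [χ]
  have ker_χ : ker χ = range g := by
    ext ⟨z, hz⟩
    simp only [χ, g, mem_ker, coe_comp, Function.comp_apply, mkQ_apply,
      Submodule.Quotient.mk_eq_zero, range_restrict, mem_comap, subtype_apply, mem_map]
    refine ⟨fun ⟨x, hx⟩ => ⟨x, ?_, hx⟩, fun ⟨x, _, hx⟩ => ⟨x, hx⟩⟩
    simpa [hx] using Z.sub_mem hz (sub_mem x)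
  have coker_g : (Z ⧸ range g) ≃ₗ[K] M ⧸ range f :=
    (quotEquivOfEq _ _ ker_χ.symm).trans (χ.quotKerEquivOfSurjective hχ)
  refine ⟨⟨ker_g.finiteDimensional, coker_g.finiteDimensional⟩, ?_⟩
  rw [index_eq_finrank_sub, ← ker_g.finrank_eq, ← coker_g.finrank_eq, ← index_eq_finrank_sub,
    index_eq_of_finiteDimensional, sub_self]

end LinearMap

theorem IsCompactOperator.exists_finiteDimensional_range_norm_sub_lt {𝕜 E F : Type*} [RCLike 𝕜]
    [NormedAddCommGroup E] [NormedSpace 𝕜 E] [NormedAddCommGroup F] [InnerProductSpace 𝕜 F]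
    {T : E →L[𝕜] F} (hT : IsCompactOperator T) {ε : ℝ} (hε : 0 < ε) :
    ∃ S : E →L[𝕜] F, FiniteDimensional 𝕜 S.range ∧ ‖T - S‖ < ε := by
  obtain ⟨C, hC, hTC⟩ := hT.image_closedBall_subset_compact (f := (T : E →ₗ[𝕜] F)) 1
  obtain ⟨t, -, ht, hCt⟩ := Metric.finite_approx_of_totallyBounded hC.totallyBounded (ε / 2)
    (half_pos hε)
  set Y := span 𝕜 t
  have : FiniteDimensional 𝕜 Y := FiniteDimensional.span_of_finite 𝕜 ht
  refine ⟨Y.starProjection ∘L T, finiteDimensional_of_le (S₂ := Y) ?_, ?_⟩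
  · rintro _ ⟨x, rfl⟩
    exact coe_mem _
  have close (x : E) (hx : ‖x‖ = 1) : ‖T x - Y.starProjection (T x)‖ ≤ ε / 2 := by
    obtain ⟨y, hyt, hy⟩ := Set.mem_iUnion₂.mp (hCt (hTC ⟨x, by simp [hx], rfl⟩))
    rw [starProjection_minimal]
    calc ⨅ z : Y, ‖T x - z‖ ≤ ‖T x - y‖ :=
          ciInf_le ⟨0, by rintro _ ⟨z, rfl⟩; positivity⟩ (⟨y, subset_span hyt⟩ : Y)
      _ ≤ ε / 2 := (mem_ball_iff_norm.mp hy).le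
  calc ‖T - Y.starProjection ∘L T‖ ≤ ε / 2 :=
        ContinuousLinearMap.opNorm_le_of_unit_norm (half_pos hε).le close
    _ < ε := half_lt_self hε

/-- Write `T = u * (1 + u⁻¹ * S)` where `S` has finite rank and `u = T - S` is a unit
because it is within distance `1` of the identity. -/
theorem ContinuousLinearMap.isAlgFredholm_and_index_eq_zero_of_isCompactOperator_sub_one
    {𝕜 E : Type*} [RCLike 𝕜] [NormedAddCommGroup E] [InnerProductSpace 𝕜 E] [CompleteSpace E]
    {T : E →L[𝕜] E} (hT : IsCompactOperator ⇑(T - 1)) :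
    (T : E →ₗ[𝕜] E).IsAlgFredholm ∧ (T : E →ₗ[𝕜] E).index = 0 := by
  obtain ⟨S, hS, hTS⟩ := hT.exists_finiteDimensional_range_norm_sub_lt one_pos
  set u := Units.oneSub (S - (T - 1)) (by rwa [norm_sub_rev])
  set h := (↑u⁻¹ * T : E →L[𝕜] E)
  have h_sub_id : (h : E →ₗ[𝕜] E) - LinearMap.id =
      ((↑u⁻¹ : E →L[𝕜] E) : E →ₗ[𝕜] E) ∘ₗ (S : E →ₗ[𝕜] E) := by
    have : h - 1 = ↑u⁻¹ * S := by
      rw [← u.inv_mul, ← mul_sub, Units.val_oneSub]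
      congr 1
      abel
    ext x
    exact congr($this x)
  have : FiniteDimensional 𝕜 (range ((h : E →ₗ[𝕜] E) - LinearMap.id)) := by
    rw [h_sub_id, range_comp]; infer_instance
  obtain ⟨hh, hh_index⟩ := isAlgFredholm_and_index_eq_zero_of_finiteDimensional_range_sub_id
    (f := (h : E →ₗ[𝕜] E))
  set e := (ContinuousLinearEquiv.unitsEquiv 𝕜 E u).toLinearEquiv
  have hT_eq : (T : E →ₗ[𝕜] E) = (e : E →ₗ[𝕜] E) ∘ₗ h := by
    ext x
    exact congr($((u.mul_inv_cancel_left T).symm) x)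
  rw [hT_eq]
  exact ⟨e.isAlgFredholm.comp hh, by rw [e.isAlgFredholm.index_comp hh, hh_index,
    LinearEquiv.index_eq_zero, add_zero]⟩

namespace Submodule

variable {𝕜 H : Type*} [RCLike 𝕜] [NormedAddCommGroup H] [InnerProductSpace 𝕜 H]
  {U V W : Submodule 𝕜 H}

def Commensurable (U V : Submodule 𝕜 H) [U.HasOrthogonalProjection] [V.HasOrthogonalProjection] :
    Prop :=
  IsCompactOperator ⇑(U.starProjection - V.starProjection)

section Commensurable

variable [U.HasOrthogonalProjection] [V.HasOrthogonalProjection] [W.HasOrthogonalProjection]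

theorem Commensurable.symm (h : Commensurable U V) : Commensurable V U := by
  simpa [Commensurable] using h.neg

theorem Commensurable.trans (hUV : Commensurable U V) (hVW : Commensurable V W) :
    Commensurable U W := by
  simpa [Commensurable] using hUV.add hVW

/-- `P_W P_V ≡ P_W P_W = P_W ≡ P_U` modulo compact operators. -/
theorem Commensurable.isCompactOperator_starProjection_comp_sub (hUW : Commensurable U W)
    (hWV : Commensurable W V) :
    IsCompactOperator ⇑(W.starProjection ∘L V.starProjection - U.starProjection) := by
  have : W.starProjection ∘L V.starProjection - U.starProjection =
      (W.starProjection - U.starProjection) -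
        W.starProjection ∘L (W.starProjection - V.starProjection) := by
    have hW : W.starProjection ∘L W.starProjection = W.starProjection :=
      W.isIdempotentElem_starProjection
    rw [ContinuousLinearMap.comp_sub, hW]
    abel
  rw [this]
  exact hUW.symm.sub (hWV.clm_comp W.starProjection)

end Commensurable

noncomputable def relDim (U V : Submodule 𝕜 H) : ℤ :=
  finrank 𝕜 ↥(U ⊓ Vᗮ) - finrank 𝕜 ↥(V ⊓ Uᗮ)

theorem relDim_comm (U V : Submodule 𝕜 H) : relDim V U = -relDim U V :=
  (neg_sub _ _).symm

noncomputable def restrictProj (U V : Submodule 𝕜 H) [V.HasOrthogonalProjection] : U →L[𝕜] V :=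
  V.orthogonalProjectionOnto ∘L U.subtypeL

section restrictProj

variable [V.HasOrthogonalProjection]

theorem restrictProj_comp_restrictProj [W.HasOrthogonalProjection] :
    restrictProj V W ∘L restrictProj U V =
      W.orthogonalProjectionOnto ∘L V.starProjection ∘L U.subtypeL :=
  rfl

theorem ker_restrictProj : (restrictProj U V).ker = (U ⊓ Vᗮ).comap U.subtype := by
  ext x
  simp [restrictProj, orthogonalProjectionOnto_eq_zero_iff]

theorem finrank_ker_restrictProj : finrank 𝕜 (restrictProj U V).ker = finrank 𝕜 ↥(U ⊓ Vᗮ) := by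
  rw [ker_restrictProj]
  exact (comapSubtypeEquivOfLe inf_le_left).finrank_eq

theorem disjoint_inf_orthogonal_range_restrictProj :
    Disjoint ((V ⊓ Uᗮ).comap V.subtype) (restrictProj U V).range := by
  rw [disjoint_def]
  rintro x ⟨-, hxU⟩ ⟨u, rfl⟩
  rw [← inner_self_eq_zero (𝕜 := 𝕜)]
  change inner 𝕜 (restrictProj U V u) (V.orthogonalProjectionOnto u) = 0
  rw [inner_orthogonalProjectionOnto_eq_of_mem_left]
  exact inner_left_of_mem_orthogonal u.2 hxU

theorem finrank_inf_orthogonal_le_finrank_coker_restrictProj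
    [FiniteDimensional 𝕜 (V ⧸ (restrictProj U V).range)] :
    finrank 𝕜 ↥(V ⊓ Uᗮ) ≤ finrank 𝕜 (V ⧸ (restrictProj U V).range) := by
  rw [← (comapSubtypeEquivOfLe (inf_le_left : V ⊓ Uᗮ ≤ V)).finrank_eq]
  refine finrank_le_finrank_of_injective (f := (restrictProj U V).range.mkQ.domRestrict _) ?_
  rw [injective_domRestrict_iff, ker_mkQ]
  exact disjoint_inf_orthogonal_range_restrictProj

end restrictProj

/-- On `U`, `P_U T - 1 = P_U (T - P_U)`, a compact perturbation of the identity. -/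
theorem isAlgFredholm_and_index_eq_zero_of_isCompactOperator_sub_starProjection [CompleteSpace U]
    {T : H →L[𝕜] H} (hT : IsCompactOperator ⇑(T - U.starProjection)) :
    ((U.orthogonalProjectionOnto ∘L T ∘L U.subtypeL : U →L[𝕜] U) : U →ₗ[𝕜] U).IsAlgFredholm ∧
      ((U.orthogonalProjectionOnto ∘L T ∘L U.subtypeL : U →L[𝕜] U) : U →ₗ[𝕜] U).index = 0 := by
  apply ContinuousLinearMap.isAlgFredholm_and_index_eq_zero_of_isCompactOperator_sub_one
  have : U.orthogonalProjectionOnto ∘L T ∘L U.subtypeL - 1 =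
      U.orthogonalProjectionOnto ∘L (T - U.starProjection) ∘L U.subtypeL := by
    ext x
    simp
  rw [this]
  exact (hT.comp_clm U.subtypeL).clm_comp U.orthogonalProjectionOnto

section Commensurable

variable [CompleteSpace U] [CompleteSpace V]

theorem Commensurable.isAlgFredholm_restrictProj (h : Commensurable U V) :
    (restrictProj U V : U →ₗ[𝕜] V).IsAlgFredholm := by
  have hVUV := (isAlgFredholm_and_index_eq_zero_of_isCompactOperator_sub_starProjection h.symm).1
  have hUVU := (isAlgFredholm_and_index_eq_zero_of_isCompactOperator_sub_starProjection h).1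
  rw [← restrictProj_comp_restrictProj, ContinuousLinearMap.toLinearMap_comp] at hVUV hUVU
  exact ⟨hVUV.finiteDimensional_ker_of_comp, hUVU.finiteDimensional_coker_of_comp⟩

theorem Commensurable.index_restrictProj (h : Commensurable U V) :
    (restrictProj U V : U →ₗ[𝕜] V).index = relDim U V := by
  have hUV := h.isAlgFredholm_restrictProj
  have hVU := h.symm.isAlgFredholm_restrictProj
  have := hUV.2
  have := hVU.2
  -- the two indices sum to `0`, while each cokernel is at least as large as the other kernel
  have h0 := (isAlgFredholm_and_index_eq_zero_of_isCompactOperator_sub_starProjection h.symm).2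
  rw [← restrictProj_comp_restrictProj, ContinuousLinearMap.toLinearMap_comp,
    hVU.index_comp hUV, index_eq_finrank_sub, index_eq_finrank_sub, finrank_ker_restrictProj,
    finrank_ker_restrictProj] at h0
  have hV := finrank_inf_orthogonal_le_finrank_coker_restrictProj (U := U) (V := V)
  have hU := finrank_inf_orthogonal_le_finrank_coker_restrictProj (U := V) (V := U)
  rw [index_eq_finrank_sub, finrank_ker_restrictProj, relDim]
  omega

end Commensurable

end Submodule

theorem relative_dimension_additive_general
    {H : Type*} [NormedAddCommGroup H] [InnerProductSpace ℝ H]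
    (U V W : Submodule ℝ H)
    [CompleteSpace U] [CompleteSpace V] [CompleteSpace W]
    (hUW : IsCompactOperator
      ⇑(U.subtypeL.comp (U.orthogonalProjectionOnto) - W.subtypeL.comp (W.orthogonalProjectionOnto)))
    (hWV : IsCompactOperator
      ⇑(W.subtypeL.comp (W.orthogonalProjectionOnto) - V.subtypeL.comp (V.orthogonalProjectionOnto))) :
    (Module.finrank ℝ ↥(U ⊓ Vᗮ) : ℤ) - (Module.finrank ℝ ↥(V ⊓ Uᗮ) : ℤ) =
      ((Module.finrank ℝ ↥(U ⊓ Wᗮ) : ℤ) - (Module.finrank ℝ ↥(W ⊓ Uᗮ) : ℤ)) +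
      ((Module.finrank ℝ ↥(W ⊓ Vᗮ) : ℤ) - (Module.finrank ℝ ↥(V ⊓ Wᗮ) : ℤ)) := by
  change relDim U V = relDim U W + relDim W V
  have hUW : Commensurable U W := hUW
  have hWV : Commensurable W V := hWV
  have hUV := hUW.trans hWV
  have hFUV := hUV.isAlgFredholm_restrictProj
  have hFVW := hWV.symm.isAlgFredholm_restrictProj
  have hFWU := hUW.symm.isAlgFredholm_restrictProj
  have h0 : ((restrictProj W U ∘L restrictProj V W ∘L restrictProj U V : U →L[ℝ] U) :
      U →ₗ[ℝ] U).index = 0 :=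
    (isAlgFredholm_and_index_eq_zero_of_isCompactOperator_sub_starProjection
      (hUW.isCompactOperator_starProjection_comp_sub hWV)).2
  rw [ContinuousLinearMap.toLinearMap_comp, ContinuousLinearMap.toLinearMap_comp,
    hFWU.index_comp (hFVW.comp hFUV), hFVW.index_comp hFUV, hUW.symm.index_restrictProj,
    hWV.symm.index_restrictProj, hUV.index_restrictProj, relDim_comm U W, relDim_comm W V] at h0
  linarith

/-- Additivity of the relative dimension (4.1.1): if `U, V, W` are pairwise
commensurable closed subspaces of a real Hilbert space (their orthogonal
projections differ by compact operators), then
`dim(U,V) = dim(U,W) + dim(W,V)`, where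
`dim(X,Y) = finrank (X ⊓ Yᗮ) - finrank (Y ⊓ Xᗮ)` as an integer. -/
theorem relative_dimension_additive
    {H : Type*} [NormedAddCommGroup H] [InnerProductSpace ℝ H] [CompleteSpace H]
    (U V W : Submodule ℝ H)
    (hU : IsClosed (U : Set H)) (hV : IsClosed (V : Set H)) (hW : IsClosed (W : Set H))
    [CompleteSpace U] [CompleteSpace V] [CompleteSpace W]
    (hUW : IsCompactOperator
      ⇑(U.subtypeL.comp (U.orthogonalProjectionOnto) - W.subtypeL.comp (W.orthogonalProjectionOnto)))
    (hWV : IsCompactOperator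
      ⇑(W.subtypeL.comp (W.orthogonalProjectionOnto) - V.subtypeL.comp (V.orthogonalProjectionOnto))) :
    (Module.finrank ℝ ↥(U ⊓ Vᗮ) : ℤ) - (Module.finrank ℝ ↥(V ⊓ Uᗮ) : ℤ) =
      ((Module.finrank ℝ ↥(U ⊓ Wᗮ) : ℤ) - (Module.finrank ℝ ↥(W ⊓ Uᗮ) : ℤ)) +
      ((Module.finrank ℝ ↥(W ⊓ Vᗮ) : ℤ) - (Module.finrank ℝ ↥(V ⊓ Wᗮ) : ℤ)) :=
  relative_dimension_additive_general U V W hUW hWV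
end

section
/- Let H be a real Hilbert space, f : H → ℝ a continuously differentiable function with gradient ∇f, and K a continuous map assigning to each w ∈ H a continuous linear operator K(w) : H → H that is symmetric with respect to the inner product and satisfies ‖K(w)‖ < 1/2. Let a ≤ b be real numbers and let w : ℝ → H be a differentiable curve satisfying w'(t) = −∇f(w(t)) − K(w(t))(∇f(w(t))) and a ≤ f(w(t)) ≤ b for all t ∈ ℝ. Then for all real numbers T₁ ≤ T₂, ∫_{T₁}^{T₂} ‖w'(t)‖² dt ≤ 5·(b − a). -/
open scoped RealInnerProductSpace

/-!
Along the flow, `(f ∘ w)' = -⟪∇f, ∇f + K ∇f⟫ ≤ -‖∇f‖² / 2` because `‖K‖ ≤ 1/2`, while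
`‖w'‖ ≤ (3/2) ‖∇f‖`. Hence `‖w'‖² ≤ 5 · (-(f ∘ w)')`, and integrating bounds the energy by five
times the drop of `f ∘ w`, which is at most `5 (b - a)`.
-/

open Set MeasureTheory

theorem intervalIntegral.integral_le_sub_of_le_hasDerivAt {u ψ ψ' : ℝ → ℝ} {a b : ℝ}
    (hab : a ≤ b) (hu : AEStronglyMeasurable u) (hu₀ : ∀ t ∈ Icc a b, 0 ≤ u t)
    (huψ : ∀ t ∈ Icc a b, u t ≤ ψ' t) (hψ : ∀ t ∈ Icc a b, HasDerivAt ψ (ψ' t) t) :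
    ∫ t in a..b, u t ≤ ψ b - ψ a := by
  have hψ_cont : ContinuousOn ψ (Icc a b) := fun t ht => (hψ t ht).continuousAt.continuousWithinAt
  have hψ'_int : IntervalIntegrable ψ' volume a b := by
    refine intervalIntegrable_deriv_of_nonneg (by rwa [uIcc_of_le hab]) (fun t ht => hψ t ?_)
      (fun t ht => (hu₀ t ?_).trans (huψ t ?_)) <;>
    simpa [hab] using Ioo_subset_Icc_self ht
  have hu_int : IntervalIntegrable u volume a b := by
    refine hψ'_int.mono_fun hu.restrict ((ae_restrict_mem measurableSet_uIoc).mono fun t ht => ?_)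
    rw [uIoc_of_le hab] at ht
    have ht' := Ioc_subset_Icc_self ht
    simp only [Real.norm_of_nonneg (hu₀ t ht'), Real.norm_of_nonneg ((hu₀ t ht').trans (huψ t ht'))]
    exact huψ t ht'
  calc ∫ t in a..b, u t ≤ ∫ t in a..b, ψ' t := integral_mono_on hab hu_int hψ'_int huψ
    _ = ψ b - ψ a := integral_eq_sub_of_hasDerivAt_of_le hab hψ_cont
        (fun t ht => hψ t (Ioo_subset_Icc_self ht)) hψ'_int

theorem HasGradientAt.comp_hasDerivAt {F : Type*} [NormedAddCommGroup F] [InnerProductSpace ℝ F]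
    [CompleteSpace F] {f : F → ℝ} {f' : F} {γ : ℝ → F} {γ' : F} {t : ℝ}
    (hf : HasGradientAt f f' (γ t)) (hγ : HasDerivAt γ γ' t) :
    HasDerivAt (f ∘ γ) ⟪f', γ'⟫ t := by
  simpa using (hasGradientAt_iff_hasFDerivAt.mp hf).comp_hasDerivAt t hγ

section

variable {E : Type*} [SeminormedAddCommGroup E] [InnerProductSpace ℝ E] (A : E →L[ℝ] E) {c : ℝ}

theorem ContinuousLinearMap.norm_add_apply_le (hA : ‖A‖ ≤ c) (v : E) :
    ‖v + A v‖ ≤ (1 + c) * ‖v‖ :=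
  calc ‖v + A v‖ ≤ ‖v‖ + ‖A v‖ := norm_add_le _ _
    _ ≤ ‖v‖ + c * ‖v‖ := by gcongr; exact A.le_of_opNorm_le hA v
    _ = (1 + c) * ‖v‖ := by ring

theorem ContinuousLinearMap.mul_norm_sq_le_inner_add_apply (hA : ‖A‖ ≤ c) (v : E) :
    (1 - c) * ‖v‖ ^ 2 ≤ ⟪v, v + A v⟫ := by
  have h : |⟪v, A v⟫| ≤ c * ‖v‖ ^ 2 :=
    calc |⟪v, A v⟫| ≤ ‖v‖ * ‖A v‖ := abs_real_inner_le_norm _ _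
      _ ≤ ‖v‖ * (c * ‖v‖) := by gcongr; exact A.le_of_opNorm_le hA v
      _ = c * ‖v‖ ^ 2 := by ring
  rw [inner_add_right, real_inner_self_eq_norm_sq]
  linarith [neg_abs_le ⟪v, A v⟫]

theorem ContinuousLinearMap.norm_add_apply_sq_le_inner (hA : ‖A‖ ≤ c) (hc : c < 1) (v : E) :
    ‖v + A v‖ ^ 2 ≤ (1 + c) ^ 2 / (1 - c) * ⟪v, v + A v⟫ := by
  rw [div_mul_eq_mul_div, le_div_iff₀ (by linarith)]
  calc ‖v + A v‖ ^ 2 * (1 - c) ≤ ((1 + c) * ‖v‖) ^ 2 * (1 - c) := by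
        have := A.norm_add_apply_le hA v
        gcongr
    _ = (1 + c) ^ 2 * ((1 - c) * ‖v‖ ^ 2) := by ring
    _ ≤ (1 + c) ^ 2 * ⟪v, v + A v⟫ := by gcongr; exact A.mul_norm_sq_le_inner_add_apply hA v

end

theorem perturbed_gradient_flow_L2_estimate_general
    {H : Type*} [NormedAddCommGroup H] [InnerProductSpace ℝ H] [CompleteSpace H]
    (f : H → ℝ) (hf : ContDiff ℝ 1 f)
    (K : H → H →L[ℝ] H)
    (hKnorm : ∀ w : H, ‖K w‖ < 1 / 2)
    (a b : ℝ)
    (w : ℝ → H)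
    (hw : ∀ t : ℝ, HasDerivAt w (-(gradient f (w t)) - K (w t) (gradient f (w t))) t)
    (hfw : ∀ t : ℝ, a ≤ f (w t) ∧ f (w t) ≤ b) :
    ∀ T₁ T₂ : ℝ, T₁ ≤ T₂ →
      (∫ t in T₁..T₂, ‖deriv w t‖ ^ 2) ≤ 5 * (b - a) := by
  intro T₁ T₂ hT
  set g : ℝ → H := fun t => gradient f (w t)
  set slope : ℝ → ℝ := fun t => ⟪g t, g t + K (w t) (g t)⟫
  have hdescent : ∀ t, HasDerivAt (f ∘ w) (-slope t) t := fun t => by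
    have := (hf.differentiable one_ne_zero (w t)).hasGradientAt.comp_hasDerivAt (hw t)
    rwa [← neg_add', inner_neg_right] at this
  have henergy : ∀ t, ‖deriv w t‖ ^ 2 ≤ 5 * slope t := fun t => by
    have hK := (K (w t)).norm_add_apply_sq_le_inner (hKnorm (w t)).le (by norm_num) (g t)
    have hslope := (K (w t)).mul_norm_sq_le_inner_add_apply (hKnorm (w t)).le (g t)
    rw [(hw t).deriv, ← neg_add', norm_neg]
    nlinarith [sq_nonneg ‖g t‖]
  have hintegral := intervalIntegral.integral_le_sub_of_le_hasDerivAt (u := fun t => ‖deriv w t‖ ^ 2)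
    (ψ := fun s => -(5 * f (w s))) hT
    ((stronglyMeasurable_deriv w).aestronglyMeasurable.norm.pow 2) (fun t _ => by positivity)
    (fun t _ => henergy t) (fun t _ => by simpa using ((hdescent t).const_mul 5).fun_neg)
  linarith [(hfw T₁).2, (hfw T₂).1]

/-- L² energy estimate (3.13): along a flow line of the perturbed negative gradient
flow whose action values stay in `[a, b]`, one has
`∫_{T₁}^{T₂} ‖w'(t)‖² dt ≤ 5 (b - a)`. -/
theorem perturbed_gradient_flow_L2_estimate
    {H : Type*} [NormedAddCommGroup H] [InnerProductSpace ℝ H] [CompleteSpace H]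
    (f : H → ℝ) (hf : ContDiff ℝ 1 f)
    (K : H → H →L[ℝ] H) (hKcont : Continuous K)
    (hKsym : ∀ w u v : H, ⟪K w u, v⟫ = ⟪u, K w v⟫)
    (hKnorm : ∀ w : H, ‖K w‖ < 1 / 2)
    (a b : ℝ) (hab : a ≤ b)
    (w : ℝ → H)
    (hw : ∀ t : ℝ, HasDerivAt w (-(gradient f (w t)) - K (w t) (gradient f (w t))) t)
    (hfw : ∀ t : ℝ, a ≤ f (w t) ∧ f (w t) ≤ b) :
    ∀ T₁ T₂ : ℝ, T₁ ≤ T₂ →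
      (∫ t in T₁..T₂, ‖deriv w t‖ ^ 2) ≤ 5 * (b - a) :=
  perturbed_gradient_flow_L2_estimate_general f hf K hKnorm a b w hw hfw
end

section
/- Let H be a real Hilbert space and let A = T₁ + T₂, where T₁ : H → H is a self-adjoint continuous linear operator with T₁ ∘ T₁ equal to the identity, and T₂ : H → H is a compact self-adjoint continuous linear operator. Then there exists d > 0 such that every λ in the real spectrum of A with λ ≠ 0 satisfies |λ| ≥ d; that is, the spectrum of A does not accumulate at 0. -/
/-!
Write `A = T₁ + T₂`. Since `T₁² = 1`, `K := A² - 1 = T₁T₂ + T₂T₁ + T₂²` is compact and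
self-adjoint, and `l ∈ σ(A)` gives `l² - 1 ∈ σ(K)`. By the Fredholm alternative the nonzero
spectrum of `K` consists of eigenvalues, and these cannot accumulate at `-1`: unit eigenvectors
for distinct eigenvalues are orthogonal, so `K` would map them to a separated bounded sequence.
Hence `l² - 1 ∉ σ(K)` for `l ≠ 0` near `0`, i.e. `σ(A)` has no nonzero points near `0`.
-/

open Filter Topology Module End

theorem IsCompactOperator.exists_ne_dist_lt_of_norm_le {𝕜 E F : Type*}
    [NontriviallyNormedField 𝕜] [NormedAddCommGroup E] [NormedSpace 𝕜 E]
    [NormedAddCommGroup F] [NormedSpace 𝕜 F]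
    {T : E →L[𝕜] F} (hT : IsCompactOperator T) {x : ℕ → E} {C : ℝ} (hx : ∀ n, ‖x n‖ ≤ C)
    {δ : ℝ} (hδ : 0 < δ) : ∃ m n, m ≠ n ∧ dist (T (x m)) (T (x n)) < δ := by
  have hmem n : T (x n) ∈ closure (T '' Metric.closedBall 0 C) :=
    subset_closure ⟨x n, by simpa using hx n, rfl⟩
  obtain ⟨_, -, φ, hφ, hlim⟩ := (hT.isCompact_closure_image_closedBall C).tendsto_subseq hmem
  obtain ⟨N, hN⟩ := Metric.cauchySeq_iff'.mp hlim.cauchySeq δ hδ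
  exact ⟨φ (N + 1), φ N, (hφ N.lt_succ_self).ne', by simpa using hN (N + 1) N.le_succ⟩

theorem isCompactOperator_add_sq_sub_one {𝕜 E : Type*} [NontriviallyNormedField 𝕜]
    [NormedAddCommGroup E] [NormedSpace 𝕜 E] {T₁ T₂ : E →L[𝕜] E} (h₁ : T₁ * T₁ = 1)
    (h₂ : IsCompactOperator T₂) :
    IsCompactOperator ((T₁ + T₂) ^ 2 - 1 : E →L[𝕜] E) := by
  have hsq : (T₁ + T₂) ^ 2 - 1 = T₁ * T₂ + T₂ * T₁ + T₂ * T₂ := by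
    rw [sq, add_mul, mul_add, mul_add, h₁]
    abel
  rw [hsq]
  exact ((h₂.clm_comp T₁).add (h₂.comp_clm T₁)).add (h₂.clm_comp T₂)

section InnerProductSpace

variable {𝕜 E : Type*} [RCLike 𝕜] [NormedAddCommGroup E] [InnerProductSpace 𝕜 E]
  {T : E →L[𝕜] E}

theorem Module.End.HasEigenvalue.exists_norm_eq_one {μ : 𝕜}
    (h : HasEigenvalue (T : End 𝕜 E) μ) : ∃ v : E, ‖v‖ = 1 ∧ T v = μ • v := by
  obtain ⟨v, hv, hv0⟩ := h.exists_hasEigenvector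
  rw [mem_eigenspace_iff] at hv
  refine ⟨((‖v‖ : 𝕜)⁻¹) • v, norm_smul_inv_norm hv0, ?_⟩
  rw [map_smul, show T v = μ • v from hv, smul_comm]

theorem IsCompactOperator.finite_setOf_hasEigenvalue_le_norm (hT : IsCompactOperator T)
    (hT' : (T : E →ₗ[𝕜] E).IsSymmetric) {ε : ℝ} (hε : 0 < ε) :
    {μ : 𝕜 | HasEigenvalue (T : End 𝕜 E) μ ∧ ε ≤ ‖μ‖}.Finite := by
  refine Set.not_infinite.mp fun hinf => ?_
  set μ : ℕ → 𝕜 := fun n => hinf.natEmbedding _ n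
  have hμ n : HasEigenvalue (T : End 𝕜 E) (μ n) ∧ ε ≤ ‖μ n‖ := (hinf.natEmbedding _ n).2
  choose e he1 heT using fun n => (hμ n).1.exists_norm_eq_one
  obtain ⟨m, n, hmn, hlt⟩ := hT.exists_ne_dist_lt_of_norm_le (fun n => (he1 n).le) hε
  have horth : inner 𝕜 (e m) (e n) = 0 := by
    have hne : μ m ≠ μ n := fun h => hmn ((hinf.natEmbedding _).injective (Subtype.ext h))
    exact hT'.orthogonalFamily_eigenspaces hne
      ⟨e m, mem_eigenspace_iff.mpr (heT m)⟩ ⟨e n, mem_eigenspace_iff.mpr (heT n)⟩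
  have hsep : ε ^ 2 ≤ dist (T (e m)) (T (e n)) ^ 2 := by
    rw [heT, heT, dist_eq_norm, @norm_sub_sq 𝕜, inner_smul_left, inner_smul_right, horth,
      mul_zero, mul_zero, map_zero, mul_zero, sub_zero, norm_smul, he1, mul_one]
    nlinarith [(hμ m).2, sq_nonneg ‖μ n • e n‖]
  nlinarith [hsep, dist_nonneg (x := T (e m)) (y := T (e n))]

theorem IsCompactOperator.eventually_notMem_spectrum [CompleteSpace E]
    (hT : IsCompactOperator T) (hT' : (T : E →ₗ[𝕜] E).IsSymmetric) {μ₀ : 𝕜} (hμ₀ : μ₀ ≠ 0) :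
    ∀ᶠ μ in 𝓝[≠] μ₀, μ ∉ spectrum 𝕜 T := by
  have hε : 0 < ‖μ₀‖ / 2 := by positivity
  have hfin := (hT.finite_setOf_hasEigenvalue_le_norm hT' hε).sdiff (t := {μ₀})
  have hfar : ∀ᶠ μ in 𝓝 μ₀, ‖μ₀‖ / 2 < ‖μ‖ :=
    continuousAt_const.eventually_lt continuous_norm.continuousAt
      (half_lt_self (norm_pos_iff.2 hμ₀))
  filter_upwards [nhdsWithin_le_nhds (hfin.isClosed.compl_mem_nhds (by simp)),
    nhdsWithin_le_nhds hfar, self_mem_nhdsWithin] with μ hμS hμ hne hspec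
  have hμ0 : μ ≠ 0 := by rintro rfl; simp at hμ; linarith
  exact hμS ⟨⟨(hT.hasEigenvalue_iff_mem_spectrum hμ0).2 hspec, hμ.le⟩, hne⟩

end InnerProductSpace

theorem spectrum.sq_sub_one_mem {𝕜 A : Type*} [Field 𝕜] [Ring A] [Algebra 𝕜 A] {a : A} {l : 𝕜}
    (hl : l ∈ spectrum 𝕜 a) : l ^ 2 - 1 ∈ spectrum 𝕜 (a ^ 2 - 1) := by
  have := spectrum.subset_polynomial_aeval a (Polynomial.X ^ 2 - 1) ⟨l, hl, rfl⟩
  simpa only [Polynomial.eval_sub, Polynomial.eval_pow, Polynomial.eval_X, Polynomial.eval_one,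
    map_sub, map_pow, Polynomial.aeval_X, map_one] using this

theorem tendsto_sq_sub_one_nhdsNE_zero :
    Tendsto (fun l : ℝ => l ^ 2 - 1) (𝓝[≠] 0) (𝓝[≠] (-1)) := by
  refine tendsto_nhdsWithin_iff.2 ⟨?_, ?_⟩
  · exact tendsto_nhdsWithin_of_tendsto_nhds
      (((continuous_pow 2).sub continuous_const).tendsto' 0 (-1) (by norm_num))
  · exact eventually_nhdsWithin_of_forall fun l (hl : l ≠ 0) => by simpa using hl

/-- Spectral gap (proof of Theorem 5.1): if `A = T₁ + T₂` with `T₁` a self-adjoint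
involution and `T₂` compact self-adjoint on a real Hilbert space, then the nonzero
real spectrum of `A` is bounded away from `0`. -/
theorem spectral_gap_of_involution_add_compact
    {H : Type*} [NormedAddCommGroup H] [InnerProductSpace ℝ H] [CompleteSpace H]
    (T₁ T₂ : H →L[ℝ] H)
    (h₁sa : IsSelfAdjoint T₁) (h₁sq : T₁.comp T₁ = ContinuousLinearMap.id ℝ H)
    (h₂sa : IsSelfAdjoint T₂) (h₂cpt : IsCompactOperator ⇑T₂) :
    ∃ d : ℝ, 0 < d ∧ ∀ l ∈ spectrum ℝ (T₁ + T₂), l ≠ 0 → d ≤ |l| := by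
  have hK_cpt := isCompactOperator_add_sq_sub_one h₁sq h₂cpt
  have hK_sym : (((T₁ + T₂) ^ 2 - 1 : H →L[ℝ] H) : H →ₗ[ℝ] H).IsSymmetric :=
    (((h₁sa.add h₂sa).pow 2).sub (.one _)).isSymmetric
  have hgap : ∀ᶠ l in 𝓝[≠] (0 : ℝ), l ∉ spectrum ℝ (T₁ + T₂) :=
    (tendsto_sq_sub_one_nhdsNE_zero.eventually
      (hK_cpt.eventually_notMem_spectrum hK_sym (by norm_num))).mono
      fun _ hl hlA => hl (spectrum.sq_sub_one_mem hlA)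
  obtain ⟨d, hd, hball⟩ := Metric.eventually_nhds_iff.1 (eventually_nhdsWithin_iff.1 hgap)
  exact ⟨d, hd, fun l hl hl0 => not_lt.1 fun h => hball (by simpa using h) hl0 hl⟩
end

section
/- Let (Ω, μ) be a finite measure space, let E, F, G be real normed vector spaces, and let φ : E × F → G be continuous. Let r₁ > 1 and r₂ > 1 be real numbers and suppose there is a constant c > 0 with ‖φ(e, f)‖^{r₁/(r₁−1)} ≤ c·(1 + ‖e‖^{r₁} + ‖f‖^{r₂}) for all (e, f) ∈ E × F. Let u, u₁, u₂, … : Ω → E and v, v₁, v₂, … : Ω → F be strongly measurable functions with ∫_Ω ‖u‖^{r₁} dμ < ∞ and ∫_Ω ‖v‖^{r₂} dμ < ∞, and assume that ∫_Ω ‖uₙ − u‖^{r₁} dμ → 0 and ∫_Ω ‖vₙ − v‖^{r₂} dμ → 0 as n → ∞. Then ∫_Ω ‖φ(uₙ(ω), vₙ(ω)) − φ(u(ω), v(ω))‖^{r₁/(r₁−1)} dμ(ω) → 0 as n → ∞; i.e., the Nemytskii map (u,v) ↦ φ(u,v) is sequentially continuous from L^{r₁}(Ω;E) × L^{r₂}(Ω;F)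 to L^{r₁/(r₁−1)}(Ω;G). -/
/-!
Pass to a subsequence along which `∑ₙ ∫ (‖uₙ - u‖^r₁ + ‖vₙ - v‖^r₂) < ∞`. Along it `uₙ → u` and
`vₙ → v` almost everywhere, so the integrand tends to `0` a.e. by continuity of `φ`, while the
growth bound dominates it by a multiple of `1 + ‖u‖^r₁ + ‖v‖^r₂ + ∑ₙ (‖uₙ - u‖^r₁ + ‖vₙ - v‖^r₂)`,
which is integrable; dominated convergence applies. Every subsequence of the original sequence
has such a further subsequence, hence the whole sequence converges.
-/

open MeasureTheory Filter Topology
open scoped ENNReal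

lemma ENNReal.ofReal_norm_rpow {E : Type*} [SeminormedAddGroup E] (a : E) {r : ℝ} (hr : 0 ≤ r) :
    ENNReal.ofReal (‖a‖ ^ r) = ‖a‖ₑ ^ r := by
  rw [← ENNReal.ofReal_rpow_of_nonneg (norm_nonneg a) hr, ofReal_norm]

section Rpow

variable {E : Type*} [SeminormedAddCommGroup E] {r : ℝ}

lemma enorm_sub_rpow_le (hr : 1 ≤ r) (a b : E) :
    ‖a - b‖ₑ ^ r ≤ 2 ^ (r - 1) * (‖a‖ₑ ^ r + ‖b‖ₑ ^ r) :=
  (ENNReal.rpow_le_rpow enorm_sub_le (by linarith)).trans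
    (ENNReal.rpow_add_le_mul_rpow_add_rpow _ _ hr)

lemma enorm_rpow_le_of_sub (hr : 1 ≤ r) (a b : E) :
    ‖a‖ₑ ^ r ≤ 2 ^ (r - 1) * (‖b‖ₑ ^ r + ‖a - b‖ₑ ^ r) := by
  simpa only [sub_sub_cancel, enorm_sub_rev b a] using enorm_sub_rpow_le hr b (b - a)

lemma tendsto_enorm_sub_rpow_zero_iff {ι : Type*} {l : Filter ι} {x : ι → E} {y : E}
    (hr : 0 < r) : Tendsto (fun i => ‖x i - y‖ₑ ^ r) l (𝓝 0) ↔ Tendsto x l (𝓝 y) := by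
  rw [tendsto_iff_edist_tendsto_0]
  simp only [edist_eq_enorm_sub]
  refine ⟨fun h => ?_, fun h => ?_⟩
  · simpa [← ENNReal.rpow_mul, hr.ne', hr] using h.ennrpow_const r⁻¹
  · simpa [hr] using h.ennrpow_const r

end Rpow

lemma exists_tsum_ne_top_of_tendsto_zero {ι : Type*} {l : Filter ι} [l.NeBot]
    {x : ι → ℝ≥0∞} (hx : Tendsto x l (𝓝 0)) : ∃ ms : ℕ → ι, ∑' k, x (ms k) ≠ ∞ := by
  have h2 : (0 : ℝ≥0∞) < 2⁻¹ := ENNReal.inv_pos.2 ENNReal.ofNat_ne_top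
  choose ms hms using fun k => (hx.eventually_lt_const (ENNReal.pow_pos h2 k)).exists
  refine ⟨ms, ne_top_of_le_ne_top ?_ (ENNReal.tsum_le_tsum fun k => (hms k).le)⟩
  simp

lemma ae_tendsto_zero_of_tsum_lintegral_ne_top {α : Type*} [MeasurableSpace α] {μ : Measure α}
    {d : ℕ → α → ℝ≥0∞} (hd : ∀ k, AEMeasurable (d k) μ) (h : ∑' k, ∫⁻ a, d k a ∂μ ≠ ∞) :
    ∀ᵐ a ∂μ, Tendsto (fun k => d k a) atTop (𝓝 0) := by
  rw [← lintegral_tsum hd] at h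
  filter_upwards [ae_lt_top' (AEMeasurable.tsum hd) h] with a ha
  exact ENNReal.tendsto_atTop_zero_of_tsum_ne_top ha.ne

lemma enorm_sub_rpow_le_of_growth {E F G : Type*} [SeminormedAddCommGroup E]
    [SeminormedAddCommGroup F] [SeminormedAddCommGroup G] {φ : E × F → G} {C : ℝ≥0∞}
    {p r₁ r₂ : ℝ} (hp : 1 ≤ p) (hr₁ : 1 ≤ r₁) (hr₂ : 1 ≤ r₂)
    (hφ : ∀ e f, ‖φ (e, f)‖ₑ ^ p ≤ C * (1 + ‖e‖ₑ ^ r₁ + ‖f‖ₑ ^ r₂)) (e e' : E) (f f' : F) :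
    ‖φ (e', f') - φ (e, f)‖ₑ ^ p ≤ 2 ^ (p - 1) * C * (2 + 2 ^ (r₁ - 1) + 2 ^ (r₂ - 1)) *
      (1 + ‖e‖ₑ ^ r₁ + ‖f‖ₑ ^ r₂ + (‖e' - e‖ₑ ^ r₁ + ‖f' - f‖ₑ ^ r₂)) := by
  set A := ‖e‖ₑ ^ r₁
  set B := ‖f‖ₑ ^ r₂
  set a := ‖e' - e‖ₑ ^ r₁
  set b := ‖f' - f‖ₑ ^ r₂
  have h1 : 1 ≤ 1 + A + B + (a + b) :=
    (le_self_add : 1 ≤ 1 + (A + B + (a + b))).trans_eq (by ring)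
  have hA : A + a ≤ 1 + A + B + (a + b) :=
    (le_add_self : A + a ≤ 1 + B + b + (A + a)).trans_eq (by ring)
  have hB : B + b ≤ 1 + A + B + (a + b) :=
    (le_add_self : B + b ≤ 1 + A + a + (B + b)).trans_eq (by ring)
  have hAB : 1 + A + B ≤ 1 + A + B + (a + b) := le_self_add
  calc ‖φ (e', f') - φ (e, f)‖ₑ ^ p
      ≤ 2 ^ (p - 1) * (‖φ (e', f')‖ₑ ^ p + ‖φ (e, f)‖ₑ ^ p) := enorm_sub_rpow_le hp _ _
    _ ≤ 2 ^ (p - 1) * (C * (1 + 2 ^ (r₁ - 1) * (A + a) + 2 ^ (r₂ - 1) * (B + b)) +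
          C * (1 + A + B)) := by
        gcongr
        · refine (hφ e' f').trans ?_
          gcongr
          exacts [enorm_rpow_le_of_sub hr₁ e' e, enorm_rpow_le_of_sub hr₂ f' f]
        · exact hφ e f
    _ ≤ 2 ^ (p - 1) * (C * ((1 + A + B + (a + b)) + 2 ^ (r₁ - 1) * (1 + A + B + (a + b)) +
          2 ^ (r₂ - 1) * (1 + A + B + (a + b))) + C * (1 + A + B + (a + b))) := by gcongr
    _ = _ := by ring

theorem tendsto_lintegral_enorm_sub_rpow_of_tsum_ne_top {Ω : Type*} [MeasurableSpace Ω]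
    {μ : Measure Ω} [IsFiniteMeasure μ] {E F G : Type*} [SeminormedAddCommGroup E]
    [SeminormedAddCommGroup F] [SeminormedAddCommGroup G] {φ : E × F → G} (hφc : Continuous φ)
    {C : ℝ≥0∞} (hC : C ≠ ∞) {p r₁ r₂ : ℝ} (hp : 1 ≤ p) (hr₁ : 1 ≤ r₁) (hr₂ : 1 ≤ r₂)
    (hφ : ∀ e f, ‖φ (e, f)‖ₑ ^ p ≤ C * (1 + ‖e‖ₑ ^ r₁ + ‖f‖ₑ ^ r₂))
    {u : Ω → E} {v : Ω → F} {un : ℕ → Ω → E} {vn : ℕ → Ω → F}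
    (hu : AEStronglyMeasurable u μ) (hv : AEStronglyMeasurable v μ)
    (hun : ∀ n, AEStronglyMeasurable (un n) μ) (hvn : ∀ n, AEStronglyMeasurable (vn n) μ)
    (hui : ∫⁻ ω, ‖u ω‖ₑ ^ r₁ ∂μ ≠ ∞) (hvi : ∫⁻ ω, ‖v ω‖ₑ ^ r₂ ∂μ ≠ ∞)
    (hsum : ∑' n, ∫⁻ ω, (‖un n ω - u ω‖ₑ ^ r₁ + ‖vn n ω - v ω‖ₑ ^ r₂) ∂μ ≠ ∞) :
    Tendsto (fun n => ∫⁻ ω, ‖φ (un n ω, vn n ω) - φ (u ω, v ω)‖ₑ ^ p ∂μ) atTop (𝓝 0) := by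
  set d : ℕ → Ω → ℝ≥0∞ := fun n ω => ‖un n ω - u ω‖ₑ ^ r₁ + ‖vn n ω - v ω‖ₑ ^ r₂
  have hd : ∀ n, AEMeasurable (d n) μ := fun n =>
    (((hun n).sub hu).enorm.pow_const r₁).add (((hvn n).sub hv).enorm.pow_const r₂)
  set K : ℝ≥0∞ := 2 ^ (p - 1) * C * (2 + 2 ^ (r₁ - 1) + 2 ^ (r₂ - 1))
  have hK : K ≠ ∞ := by finiteness
  have hbound : ∫⁻ ω, K * (1 + ‖u ω‖ₑ ^ r₁ + ‖v ω‖ₑ ^ r₂ + ∑' n, d n ω) ∂μ ≠ ∞ := by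
    rw [lintegral_const_mul' _ _ hK, lintegral_add_right' _ (AEMeasurable.tsum hd),
      lintegral_add_right' _ (hv.enorm.pow_const r₂),
      lintegral_add_right' _ (hu.enorm.pow_const r₁), lintegral_const, lintegral_tsum hd]
    finiteness
  have hlim : ∀ᵐ ω ∂μ, Tendsto (fun n => ‖φ (un n ω, vn n ω) - φ (u ω, v ω)‖ₑ ^ p) atTop (𝓝 0) := by
    filter_upwards [ae_tendsto_zero_of_tsum_lintegral_ne_top hd hsum] with ω hω
    have hu' : Tendsto (un · ω) atTop (𝓝 (u ω)) := (tendsto_enorm_sub_rpow_zero_iff (by linarith)).1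
      (tendsto_nhds_bot_mono' hω fun _ => le_self_add)
    have hv' : Tendsto (vn · ω) atTop (𝓝 (v ω)) := (tendsto_enorm_sub_rpow_zero_iff (by linarith)).1
      (tendsto_nhds_bot_mono' hω fun _ => le_add_self)
    exact (tendsto_enorm_sub_rpow_zero_iff (by linarith)).2
      ((hφc.tendsto _).comp (hu'.prodMk_nhds hv'))
  have hF : ∀ n, AEMeasurable (fun ω => ‖φ (un n ω, vn n ω) - φ (u ω, v ω)‖ₑ ^ p) μ := fun n =>
    ((hφc.comp_aestronglyMeasurable ((hun n).prodMk (hvn n))).sub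
      (hφc.comp_aestronglyMeasurable (hu.prodMk hv))).enorm.pow_const p
  simpa using tendsto_lintegral_of_dominated_convergence' _ hF
    (fun n => ae_of_all _ fun ω => (enorm_sub_rpow_le_of_growth hp hr₁ hr₂ hφ _ _ _ _).trans
      (by gcongr; exact ENNReal.le_tsum n)) hbound hlim

theorem nemytskii_sequential_continuity_general
    {Ω : Type*} [MeasurableSpace Ω] (μ : MeasureTheory.Measure Ω) [IsFiniteMeasure μ]
    {E F G : Type*} [NormedAddCommGroup E] [NormedAddCommGroup F] [NormedAddCommGroup G]
    (φ : E × F → G) (hφ : Continuous φ)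
    (r₁ r₂ : ℝ) (hr₁ : 1 < r₁) (hr₂ : 1 < r₂)
    (c : ℝ)
    (hgrowth : ∀ (e : E) (f : F),
      ‖φ (e, f)‖ ^ (r₁ / (r₁ - 1)) ≤ c * (1 + ‖e‖ ^ r₁ + ‖f‖ ^ r₂))
    (u : Ω → E) (v : Ω → F) (un : ℕ → Ω → E) (vn : ℕ → Ω → F)
    (hu : StronglyMeasurable u) (hv : StronglyMeasurable v)
    (hun : ∀ n, StronglyMeasurable (un n)) (hvn : ∀ n, StronglyMeasurable (vn n))
    (hui : ∫⁻ ω, ENNReal.ofReal (‖u ω‖ ^ r₁) ∂μ < ⊤)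
    (hvi : ∫⁻ ω, ENNReal.ofReal (‖v ω‖ ^ r₂) ∂μ < ⊤)
    (hulim : Tendsto (fun n => ∫⁻ ω, ENNReal.ofReal (‖un n ω - u ω‖ ^ r₁) ∂μ)
      atTop (nhds 0))
    (hvlim : Tendsto (fun n => ∫⁻ ω, ENNReal.ofReal (‖vn n ω - v ω‖ ^ r₂) ∂μ)
      atTop (nhds 0)) :
    Tendsto (fun n => ∫⁻ ω,
        ENNReal.ofReal (‖φ (un n ω, vn n ω) - φ (u ω, v ω)‖ ^ (r₁ / (r₁ - 1))) ∂μ)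
      atTop (nhds 0) := by
  have hp : 1 ≤ r₁ / (r₁ - 1) := (one_le_div (by linarith)).2 (by linarith)
  have hr₁0 : 0 ≤ r₁ := by linarith
  have hr₂0 : 0 ≤ r₂ := by linarith
  have hp0 : 0 ≤ r₁ / (r₁ - 1) := by linarith
  simp only [ENNReal.ofReal_norm_rpow _ hr₁0, ENNReal.ofReal_norm_rpow _ hr₂0,
    ENNReal.ofReal_norm_rpow _ hp0] at hui hvi hulim hvlim ⊢
  have hgrowth' (e : E) (f : F) : ‖φ (e, f)‖ₑ ^ (r₁ / (r₁ - 1)) ≤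
      ENNReal.ofReal c * (1 + ‖e‖ₑ ^ r₁ + ‖f‖ₑ ^ r₂) := by
    have h := ENNReal.ofReal_le_ofReal (hgrowth e f)
    rwa [ENNReal.ofReal_mul' (by positivity), ENNReal.ofReal_add (by positivity) (by positivity),
      ENNReal.ofReal_add zero_le_one (by positivity), ENNReal.ofReal_one,
      ENNReal.ofReal_norm_rpow _ hr₁0, ENNReal.ofReal_norm_rpow _ hr₂0,
      ENNReal.ofReal_norm_rpow _ hp0] at h
  have hsum : Tendsto (fun n => ∫⁻ ω, (‖un n ω - u ω‖ₑ ^ r₁ + ‖vn n ω - v ω‖ₑ ^ r₂) ∂μ)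
      atTop (𝓝 0) := by
    refine Tendsto.congr (fun n => (lintegral_add_left' ?_ _).symm) (by simpa using hulim.add hvlim)
    exact ((hun n).sub hu).aestronglyMeasurable.enorm.pow_const r₁
  refine tendsto_of_subseq_tendsto fun ns hns => ?_
  obtain ⟨ms, hms⟩ := exists_tsum_ne_top_of_tendsto_zero (hsum.comp hns)
  exact ⟨ms, tendsto_lintegral_enorm_sub_rpow_of_tsum_ne_top hφ ENNReal.ofReal_ne_top hp hr₁.le
    hr₂.le hgrowth' hu.aestronglyMeasurable hv.aestronglyMeasurable
    (fun _ => (hun _).aestronglyMeasurable) (fun _ => (hvn _).aestronglyMeasurable)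
    hui.ne hvi.ne hms⟩

/-- Continuity of the Nemytskii operator (Appendix A, Step 2): a continuous map
`φ : E × F → G` satisfying the growth bound
`‖φ(e,f)‖^{r₁/(r₁-1)} ≤ c (1 + ‖e‖^{r₁} + ‖f‖^{r₂})` induces a sequentially
continuous superposition operator from `L^{r₁} × L^{r₂}` to `L^{r₁/(r₁-1)}`. -/
theorem nemytskii_sequential_continuity
    {Ω : Type*} [MeasurableSpace Ω] (μ : MeasureTheory.Measure Ω) [IsFiniteMeasure μ]
    {E F G : Type*} [NormedAddCommGroup E] [NormedAddCommGroup F] [NormedAddCommGroup G]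
    (φ : E × F → G) (hφ : Continuous φ)
    (r₁ r₂ : ℝ) (hr₁ : 1 < r₁) (hr₂ : 1 < r₂)
    (c : ℝ) (hc : 0 < c)
    (hgrowth : ∀ (e : E) (f : F),
      ‖φ (e, f)‖ ^ (r₁ / (r₁ - 1)) ≤ c * (1 + ‖e‖ ^ r₁ + ‖f‖ ^ r₂))
    (u : Ω → E) (v : Ω → F) (un : ℕ → Ω → E) (vn : ℕ → Ω → F)
    (hu : StronglyMeasurable u) (hv : StronglyMeasurable v)
    (hun : ∀ n, StronglyMeasurable (un n)) (hvn : ∀ n, StronglyMeasurable (vn n))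
    (hui : ∫⁻ ω, ENNReal.ofReal (‖u ω‖ ^ r₁) ∂μ < ⊤)
    (hvi : ∫⁻ ω, ENNReal.ofReal (‖v ω‖ ^ r₂) ∂μ < ⊤)
    (hulim : Tendsto (fun n => ∫⁻ ω, ENNReal.ofReal (‖un n ω - u ω‖ ^ r₁) ∂μ)
      atTop (nhds 0))
    (hvlim : Tendsto (fun n => ∫⁻ ω, ENNReal.ofReal (‖vn n ω - v ω‖ ^ r₂) ∂μ)
      atTop (nhds 0)) :
    Tendsto (fun n => ∫⁻ ω,
        ENNReal.ofReal (‖φ (un n ω, vn n ω) - φ (u ω, v ω)‖ ^ (r₁ / (r₁ - 1))) ∂μ)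
      atTop (nhds 0) :=
  nemytskii_sequential_continuity_general μ φ hφ r₁ r₂ hr₁ hr₂ c hgrowth u v un vn hu hv hun hvn hui
    hvi hulim hvlim
end
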